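/- arXiv:1711.06345 — 3 statements merged into one kernel-verified Lean document; each statement's English description precedes it below -/
import Mathlib

section
/- Let a, d ∈ ℚ with a ∉ {0, −1} and suppose (a+1)d² + (1−a)d − 1 = 0. Then d ≠ 0, (a+1)d² ≠ 0, the value e := ((a+1)d² − a·d − 1)/((a+1)d²) satisfies e ≠ 0, e ≠ d, (a+1)e² ≠ 0, and ((a+1)e² − a·e − 1)/((a+1)e²) = d. In other words, d is a point of exact period 2 for the map φ_a. -/
/-!
A root `d` of the dynatomic factor `(a+1)z² + (1-a)z - 1` satisfies `(a+1)d² = a d + 1 - d`, which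
collapses `φ_a(d)` to `-1/((a+1)d)`. By Vieta this is the other root of the same quadratic, so `φ_a`
swaps the two roots. They are distinct because the discriminant `(1-a)² + 4(a+1) = (a+1)² + 4` is
positive.
-/

/-- `φ_a`, normalized so that its critical points `0` and `∞` lie on the 3-cycle `0 → ∞ → 1 → 0`. -/
def critCycleMap {K : Type*} [Field K] (a z : K) : K :=
  ((a + 1) * z ^ 2 - a * z - 1) / ((a + 1) * z ^ 2)

section Field

variable {K : Type*} [Field K] {a d : K}

theorem ne_zero_of_dynatomic (hd : (a + 1) * d ^ 2 + (1 - a) * d - 1 = 0) : d ≠ 0 := by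
  rintro rfl
  norm_num at hd

theorem critCycleMap_of_dynatomic (ha : a + 1 ≠ 0) (hd : (a + 1) * d ^ 2 + (1 - a) * d - 1 = 0) :
    critCycleMap a d = -1 / ((a + 1) * d) := by
  have hd0 := ne_zero_of_dynatomic hd
  rw [critCycleMap, div_eq_div_iff (by positivity) (by positivity)]
  linear_combination ((a + 1) * d) * hd

theorem dynatomic_neg_inv (ha : a + 1 ≠ 0) (hd : (a + 1) * d ^ 2 + (1 - a) * d - 1 = 0) :
    (a + 1) * (-1 / ((a + 1) * d)) ^ 2 + (1 - a) * (-1 / ((a + 1) * d)) - 1 = 0 := by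
  have hd0 := ne_zero_of_dynatomic hd
  field_simp
  linear_combination (-1 : K) * hd

end Field

theorem neg_inv_ne_of_dynatomic {K : Type*} [Field K] [LinearOrder K] [IsStrictOrderedRing K]
    {a d : K} (ha : a + 1 ≠ 0) (hd : (a + 1) * d ^ 2 + (1 - a) * d - 1 = 0) :
    -1 / ((a + 1) * d) ≠ d := by
  have hd0 := ne_zero_of_dynatomic hd
  intro h
  rw [div_eq_iff (by positivity)] at h
  have hlin : (1 - a) * d = 2 := by linear_combination hd + h
  have hsq : (a + 1) ^ 2 + 4 = 0 := by
    linear_combination -(1 - a) ^ 2 * h - (a + 1) * ((1 - a) * d + 2) * hlin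
  nlinarith [sq_nonneg (a + 1)]

theorem stmt_0_general (a d e : ℚ) (ha1 : a ≠ -1)
    (hd : (a + 1) * d ^ 2 + (1 - a) * d - 1 = 0)
    (he : e = ((a + 1) * d ^ 2 - a * d - 1) / ((a + 1) * d ^ 2)) :
    d ≠ 0 ∧ (a + 1) * d ^ 2 ≠ 0 ∧ e ≠ 0 ∧ e ≠ d ∧ (a + 1) * e ^ 2 ≠ 0 ∧
      ((a + 1) * e ^ 2 - a * e - 1) / ((a + 1) * e ^ 2) = d := by
  have ha : a + 1 ≠ 0 := by rwa [Ne, add_eq_zero_iff_eq_neg]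
  have hd0 := ne_zero_of_dynatomic hd
  have he' : e = -1 / ((a + 1) * d) := he.trans (critCycleMap_of_dynatomic ha hd)
  have hroot_e : (a + 1) * e ^ 2 + (1 - a) * e - 1 = 0 := he' ▸ dynatomic_neg_inv ha hd
  have he0 := ne_zero_of_dynatomic hroot_e
  refine ⟨hd0, by positivity, he0, he' ▸ neg_inv_ne_of_dynatomic ha hd, by positivity, ?_⟩
  change critCycleMap a e = d
  rw [critCycleMap_of_dynatomic ha hroot_e, he']
  field_simp

/-- For `a ∉ {0, -1}` and `d` a root of the second dynatomic factor
`(a+1)d² + (1-a)d - 1`, the point `d` has exact period 2 under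
`φ_a(z) = ((a+1)z² - a z - 1)/((a+1)z²)`. -/
theorem stmt_0 (a d e : ℚ) (ha0 : a ≠ 0) (ha1 : a ≠ -1)
    (hd : (a + 1) * d ^ 2 + (1 - a) * d - 1 = 0)
    (he : e = ((a + 1) * d ^ 2 - a * d - 1) / ((a + 1) * d ^ 2)) :
    d ≠ 0 ∧ (a + 1) * d ^ 2 ≠ 0 ∧ e ≠ 0 ∧ e ≠ d ∧ (a + 1) * e ^ 2 ≠ 0 ∧
      ((a + 1) * e ^ 2 - a * e - 1) / ((a + 1) * e ^ 2) = d :=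
  stmt_0_general a d e ha1 hd he
end

section
/- The only pairs (c, z) ∈ ℚ × ℚ satisfying c²z² − 3c²z + c² + cz² + cz − c − z² + z = 0 are (c, z) ∈ {(0, 0), (0, 1), (1, 0), (1, 1)}. -/
/-!
Completing the square in `c` turns the curve into `y² = 5z⁴ - 14z³ + 15z² - 6z + 1`, and writing
`z = p / q`, `r = p - q` this becomes `Y² = (r² + pr - p²)² + (2pr)²` over `ℤ`. Parametrising this
primitive Pythagorean triple and splitting `pr` with the four-number lemma leads to pairwise
coprime `a, b, c, d` with `ad = b² + c²` and `bc = a² - d²`, and a 2-descent shows that this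
system has only the solutions with `bc = 0`. Each step of the descent ends in an equation
`S² X = P² Y` with coprime `S, P`, hence `X = k P²`, `Y = k S²` with `k ∣ 17`. Either congruences
modulo 8 rule out `k ∈ {1, 17}`, or one lands on `x² = m⁴ + 9m²n² + 16n⁴` or on
`x² = -(m⁴ - 9m²n² + 16n⁴)` (written `x² + (m² - 4n²)² = (mn)²`) with `m` odd. The second has no
solution, and a solution of the first with `n ≠ 0` produces one with smaller `|m|`.
-/

lemma Int.sq_emod_four_of_even {n : ℤ} (h : Even n) : n ^ 2 % 4 = 0 := by
  obtain ⟨k, rfl⟩ := h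
  have : (k + k) ^ 2 = 4 * k ^ 2 := by ring
  omega

lemma Int.sq_emod_eight_of_odd {n : ℤ} (h : Odd n) : n ^ 2 % 8 = 1 := by
  obtain ⟨k, rfl⟩ := h
  obtain ⟨j, hj⟩ := Int.even_mul_succ_self k
  have : (2 * k + 1) ^ 2 = 4 * (k * (k + 1)) + 1 := by ring
  omega

lemma Int.isCoprime_four_right_of_odd {m : ℤ} (hm : Odd m) : IsCoprime m 4 := by
  simpa using (Int.isCoprime_two_right.mpr hm).pow_right (n := 2)

lemma Int.isCoprime_sixteen_right_of_odd {m : ℤ} (hm : Odd m) : IsCoprime m 16 := by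
  simpa using (Int.isCoprime_two_right.mpr hm).pow_right (n := 4)

lemma IsCoprime.odd_right_of_even {b c : ℤ} (h : IsCoprime b c) (hb : Even b) : Odd c :=
  Int.isCoprime_two_left.mp (h.of_isCoprime_of_dvd_left (even_iff_two_dvd.mp hb))

lemma IsCoprime.sq_add_mul_sq_mul {R : Type*} [CommRing R] {m n k : R} (hmk : IsCoprime m k)
    (hmn : IsCoprime m n) : IsCoprime (m ^ 2 + k * n ^ 2) (m * n) := by
  refine IsCoprime.mul_right ?_ ?_
  · rw [show m ^ 2 + k * n ^ 2 = k * n ^ 2 + m * m by ring]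
    exact ((hmk.mul_right hmn.pow_right).add_mul_left_right m).symm
  · rw [show m ^ 2 + k * n ^ 2 = m ^ 2 + n * (k * n) by ring]
    exact (hmn.symm.pow_right.add_mul_left_right _).symm

lemma IsCoprime.sub_add_of_odd {m n : ℤ} (hco : IsCoprime m n) (hmn : Odd (m - n)) :
    IsCoprime (m - n) (m + n) := by
  have hn : IsCoprime (m - n) n := by
    rw [show m - n = m + n * (-1) by ring]
    exact hco.add_mul_left_left _
  rw [show m + n = 2 * n + (m - n) * 1 by ring]
  exact ((Int.isCoprime_two_right.mpr hmn).mul_right hn).add_mul_left_right 1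

lemma exists_mul_mul_of_mul_eq_mul {α : Type*} [CommMonoidWithZero α] [IsCancelMulZero α]
    [DecompositionMonoid α] {a b c d : α} (ha : a ≠ 0) (h : a * b = c * d) :
    ∃ P Q R S, a = P * R ∧ b = Q * S ∧ c = P * Q ∧ d = R * S := by
  obtain ⟨P, R, ⟨Q, rfl⟩, ⟨S, rfl⟩, rfl⟩ := exists_dvd_and_dvd_of_dvd_mul (Dvd.intro b h)
  refine ⟨P, Q, R, S, rfl, mul_left_cancel₀ ha ?_, rfl, rfl⟩
  rw [h, mul_mul_mul_comm]

lemma IsCoprime.exists_of_sq_mul_eq_sq_mul {α : Type*} [CommSemiring α] [IsDomain α]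
    {R Q X Y : α} (hco : IsCoprime R Q) (hR : R ≠ 0) (h : R ^ 2 * X = Q ^ 2 * Y) :
    ∃ k, X = k * Q ^ 2 ∧ Y = k * R ^ 2 := by
  obtain ⟨k, hk⟩ := hco.pow.dvd_of_dvd_mul_left (Dvd.intro X h)
  refine ⟨k, mul_left_cancel₀ (pow_ne_zero 2 hR) ?_, by rw [hk, mul_comm]⟩
  rw [h, hk]
  ring

lemma Int.eq_one_or_eq_of_dvd_mul_sq {p k x y : ℤ} (hp : Prime p) (hp0 : 0 < p) (hk : 0 < k)
    (hco : IsCoprime x y) (hx : k ∣ p * x ^ 2) (hy : k ∣ p * y ^ 2) : k = 1 ∨ k = p := by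
  obtain ⟨α, β, hαβ⟩ := hco.pow (m := 2) (n := 2)
  have hkp : k ∣ p := by
    rw [show p = α * (p * x ^ 2) + β * (p * y ^ 2) by linear_combination -p * hαβ]
    exact dvd_add (hx.mul_left α) (hy.mul_left β)
  have := (Nat.prime_def.mp (Int.prime_iff_natAbs_prime.mp hp)).2 k.natAbs
    (Int.natAbs_dvd_natAbs.mpr hkp)
  omega

lemma Int.eq_one_or_seventeen_of_dvd {k x y : ℤ} (hk : 0 < k) (hco : IsCoprime x y)
    (hx : k ∣ 17 * x ^ 2) (hy : k ∣ 17 * y ^ 2) : k = 1 ∨ k = 17 :=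
  Int.eq_one_or_eq_of_dvd_mul_sq (Int.prime_iff_natAbs_prime.mpr (by norm_num)) (by norm_num)
    hk hco hx hy

/-- Coprimality gives `4 R² + Q² = k S²` with `k ∣ 17`, so `k ≡ 1 [ZMOD 8]`, whereas
`4 R² + Q² ≡ 5 [ZMOD 8]`. -/
lemma Int.sq_mul_ne_sq_mul_of_odd {P Q R S : ℤ} (hQ : Odd Q) (hR : Odd R) (hS : Odd S)
    (hSP : IsCoprime S P) (hRQ : IsCoprime R Q) :
    S ^ 2 * (R ^ 2 - 4 * Q ^ 2) ≠ P ^ 2 * (4 * R ^ 2 + Q ^ 2) := by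
  intro h
  have hQ8 := Int.sq_emod_eight_of_odd hQ
  have hR8 := Int.sq_emod_eight_of_odd hR
  have hS8 := Int.sq_emod_eight_of_odd hS
  obtain ⟨k, hk₁, hk₂⟩ := hSP.exists_of_sq_mul_eq_sq_mul (by rintro rfl; simp at hS) h
  have hk : 0 < k := pos_of_mul_pos_left
    (by have := sq_nonneg R; have := sq_nonneg Q; omega) (sq_nonneg S)
  rcases Int.eq_one_or_seventeen_of_dvd hk hRQ
    ⟨P ^ 2 + 4 * S ^ 2, by linear_combination hk₁ + 4 * hk₂⟩
    ⟨S ^ 2 - 4 * P ^ 2, by linear_combination hk₂ - 4 * hk₁⟩ with rfl | rfl <;> omega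

lemma Int.exists_sq_sub_sq_of_sq_eq_sq_add_sq {W X Z : ℤ} (hW : Odd W) (hco : IsCoprime W X)
    (h : Z ^ 2 = W ^ 2 + (2 * X) ^ 2) :
    ∃ u v, IsCoprime u v ∧ (Even u ∧ Odd v ∨ Odd u ∧ Even v) ∧
      W = u ^ 2 - v ^ 2 ∧ X = u * v := by
  have hZ : 0 < |Z| := abs_pos.mpr <| by
    rintro rfl
    have := Int.sq_emod_eight_of_odd hW
    have := sq_nonneg W
    have := sq_nonneg (2 * X)
    omega
  have hpt : PythagoreanTriple W (2 * X) |Z| := by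
    rw [PythagoreanTriple, ← sq, ← sq, ← sq, sq_abs, h]
  have hgcd : Int.gcd W (2 * X) = 1 :=
    Int.isCoprime_iff_gcd_eq_one.mp ((Int.isCoprime_two_right.mpr hW).mul_right hco)
  obtain ⟨u, v, hWuv, hXuv, -, huv, hpar, -⟩ :=
    hpt.coprime_classification' hgcd (Int.odd_iff.mp hW) hZ
  refine ⟨u, v, Int.isCoprime_iff_gcd_eq_one.mpr huv, ?_, hWuv, by linarith⟩
  simpa only [Int.even_iff, Int.odd_iff] using hpar

lemma Int.exists_of_sq_eq_sq_add_sixteen_mul_sq {d C e : ℤ} (hd : Odd d) (hco : IsCoprime d C)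
    (h : e ^ 2 = d ^ 2 + 16 * C ^ 2) :
    ∃ u t, Odd u ∧ IsCoprime u t ∧ C = u * t ∧ d ^ 2 = (u ^ 2 - 4 * t ^ 2) ^ 2 := by
  obtain ⟨α, β, hαβ, hpar, hdαβ, hC⟩ := Int.exists_sq_sub_sq_of_sq_eq_sq_add_sq
    (X := 2 * C) (Z := e) hd ((Int.isCoprime_two_right.mpr hd).mul_right hco)
    (by linear_combination h)
  rcases hpar with ⟨⟨t, rfl⟩, hβ⟩ | ⟨hα, ⟨t, rfl⟩⟩
  · refine ⟨β, t, hβ, hαβ.symm.of_isCoprime_of_dvd_right ⟨2, by ring⟩, by linarith, ?_⟩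
    rw [hdαβ]; ring
  · refine ⟨α, t, hα, hαβ.of_isCoprime_of_dvd_right ⟨2, by ring⟩, by linarith, ?_⟩
    rw [hdαβ]; ring

lemma Int.odd_and_even_of_sq_add_sq_eq {m n x : ℤ} (hm : Odd m)
    (h : x ^ 2 + (m ^ 2 - 4 * n ^ 2) ^ 2 = (m * n) ^ 2) : Odd n ∧ Even x := by
  have h4 : Even (4 : ℤ) := by decide
  have hW := Int.sq_emod_eight_of_odd (by simp [parity_simps, hm, h4] : Odd (m ^ 2 - 4 * n ^ 2))
  have hn : Odd n := by
    refine (Int.even_or_odd n).resolve_left fun hn ↦ ?_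
    have := Int.sq_emod_four_of_even (hn.mul_left m)
    rcases Int.even_or_odd x with hx | hx
    · have := Int.sq_emod_four_of_even hx; omega
    · have := Int.sq_emod_eight_of_odd hx; omega
  refine ⟨hn, (Int.even_or_odd x).resolve_right fun hx ↦ ?_⟩
  have := Int.sq_emod_eight_of_odd hx
  have := Int.sq_emod_eight_of_odd (hm.mul hn)
  omega

lemma Int.sq_add_sq_ne_sq_mul_of_odd {m n x : ℤ} (hm : Odd m) (hco : IsCoprime m n) :
    x ^ 2 + (m ^ 2 - 4 * n ^ 2) ^ 2 ≠ (m * n) ^ 2 := by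
  intro h
  obtain ⟨hn, y, rfl⟩ := Int.odd_and_even_of_sq_add_sq_eq hm h
  have hW : Odd (m ^ 2 - 4 * n ^ 2) := by simp [parity_simps, hm, show Even (4 : ℤ) by decide]
  have hWy : IsCoprime (m ^ 2 - 4 * n ^ 2) y := by
    have := (Int.isCoprime_four_right_of_odd hm).neg_right.sq_add_mul_sq_mul hco |>.pow_right
      (n := 2)
    rw [show (m * n) ^ 2 = y ^ 2 * 4 + (m ^ 2 + -4 * n ^ 2) * (m ^ 2 + -4 * n ^ 2) by
      linear_combination -h] at this
    simpa only [neg_mul, ← sub_eq_add_neg] using this.of_add_mul_left_right.of_mul_right_left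
      |>.of_isCoprime_of_dvd_right (dvd_pow_self y two_ne_zero)
  obtain ⟨α, β, -, -, hαβ, hy⟩ := Int.exists_sq_sub_sq_of_sq_eq_sq_add_sq (Z := m * n) hW hWy
    (by linear_combination -h)
  have hodd : Odd (m - 2 * n) := by simp [parity_simps, hm]
  have hodd' : Odd (m + 2 * n) := by simp [parity_simps, hm]
  obtain ⟨P, Q, R, S, hPR, hQS, hPQ, hRS⟩ := exists_mul_mul_of_mul_eq_mul
    (a := m - 2 * n) (b := m + 2 * n) (c := α - β) (d := α + β)
    (by rintro h0; simp [h0] at hodd) (by linear_combination hαβ)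
  have hco' := ((Int.isCoprime_two_left.mpr hm).symm.mul_right hco).sub_add_of_odd hodd
  have hQR : IsCoprime Q R := (hco'.symm.of_isCoprime_of_dvd_left ⟨S, hQS⟩)
    |>.of_isCoprime_of_dvd_right ⟨P, by rw [hPR]; ring⟩
  have hSP : IsCoprime S P := (hco'.symm.of_isCoprime_of_dvd_left ⟨Q, by rw [hQS]; ring⟩)
    |>.of_isCoprime_of_dvd_right ⟨R, hPR⟩
  obtain ⟨hP, hR⟩ := Int.odd_mul.mp (hPR ▸ hodd)
  obtain ⟨hQ, hS⟩ := Int.odd_mul.mp (hQS ▸ hodd')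
  have e₁ : 8 * (m * n) = (Q * S) ^ 2 - (P * R) ^ 2 := by rw [← hQS, ← hPR]; ring
  have e₂ : 2 * (α ^ 2 + β ^ 2) = (P * Q) ^ 2 + (R * S) ^ 2 := by rw [← hPQ, ← hRS]; ring
  rcases sq_eq_sq_iff_eq_or_eq_neg.mp (show (m * n) ^ 2 = (α ^ 2 + β ^ 2) ^ 2 by
    linear_combination -h + 4 * (y + α * β) * hy + (m ^ 2 - 4 * n ^ 2 + α ^ 2 - β ^ 2) * hαβ)
    with hε | hε
  · exact Int.sq_mul_ne_sq_mul_of_odd hP hS hQ hQR hSP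
      (by linear_combination 8 * hε - e₁ + 4 * e₂)
  · exact Int.sq_mul_ne_sq_mul_of_odd hQ hR hP hSP.symm hQR.symm
      (by linear_combination -8 * hε + e₁ + 4 * e₂)

lemma Int.sq_add_sq_ne_of_sq_eq_sq_add_sixteen_mul_sq {P Q R S : ℤ} (hP : Odd P)
    (hco : IsCoprime P S) (h : R ^ 2 = P ^ 2 + 16 * S ^ 2) : Q ^ 2 + P ^ 2 ≠ S ^ 2 := by
  obtain ⟨u, t, hu, hut, rfl, hP⟩ := Int.exists_of_sq_eq_sq_add_sixteen_mul_sq hP hco h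
  rw [hP]
  exact Int.sq_add_sq_ne_sq_mul_of_odd hu hut

lemma Int.exists_sq_eq_biquadratic_of_sq_eq_sq_add_sixteen_mul_sq {P Q R S : ℤ} (hP : Odd P)
    (hco : IsCoprime P Q) (h₁ : R ^ 2 = P ^ 2 + 16 * Q ^ 2) (h₂ : S ^ 2 = Q ^ 2 + R ^ 2) :
    ∃ u t, Odd u ∧ IsCoprime u t ∧ Q = u * t ∧ R ^ 2 = (u ^ 2 + 4 * t ^ 2) ^ 2 ∧
      S ^ 2 = u ^ 4 + 9 * u ^ 2 * t ^ 2 + 16 * t ^ 4 := by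
  obtain ⟨u, t, hu, hut, rfl, hP⟩ := Int.exists_of_sq_eq_sq_add_sixteen_mul_sq hP hco h₁
  exact ⟨u, t, hu, hut, rfl, by linear_combination h₁ + hP, by linear_combination h₂ + h₁ + hP⟩

lemma Int.even_of_sq_eq_biquadratic {m n x : ℤ} (hm : Odd m)
    (h : x ^ 2 = m ^ 4 + 9 * m ^ 2 * n ^ 2 + 16 * n ^ 4) : Even n := by
  refine (Int.even_or_odd n).resolve_right fun hn ↦ ?_
  have h4 : Even (4 : ℤ) := by decide
  have := Int.sq_emod_eight_of_odd (by simp [parity_simps, hm, h4] : Odd (m ^ 2 + 4 * n ^ 2))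
  have := Int.sq_emod_eight_of_odd (hm.mul hn)
  have h' : x ^ 2 = (m ^ 2 + 4 * n ^ 2) ^ 2 + (m * n) ^ 2 := by linear_combination h
  rcases Int.even_or_odd x with hx | hx
  · have := Int.sq_emod_four_of_even hx; omega
  · have := Int.sq_emod_eight_of_odd hx; omega

lemma Int.exists_sq_lt_of_sq_eq_biquadratic {m n x : ℤ} (hm : Odd m) (hco : IsCoprime m n)
    (hn : n ≠ 0) (h : x ^ 2 = m ^ 4 + 9 * m ^ 2 * n ^ 2 + 16 * n ^ 4) :
    ∃ u t y, Odd u ∧ IsCoprime u t ∧ t ≠ 0 ∧ u ^ 2 < m ^ 2 ∧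
      y ^ 2 = u ^ 4 + 9 * u ^ 2 * t ^ 2 + 16 * t ^ 4 := by
  obtain ⟨n, rfl⟩ := Int.even_of_sq_eq_biquadratic hm h
  have hn : n ≠ 0 := by rintro rfl; simp at hn
  have hco : IsCoprime m n := hco.of_isCoprime_of_dvd_right ⟨2, by ring⟩
  obtain ⟨α, β, hαβ, -, hW, hX⟩ := Int.exists_sq_sub_sq_of_sq_eq_sq_add_sq (Z := x)
    (by simp [parity_simps, hm, show Even (16 : ℤ) by decide])
    ((Int.isCoprime_sixteen_right_of_odd hm).sq_add_mul_sq_mul hco) (by linear_combination h)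
  obtain ⟨A, C, B, D, rfl, rfl, rfl, rfl⟩ :=
    exists_mul_mul_of_mul_eq_mul (by rintro rfl; simp at hm) hX
  have hAD : IsCoprime A D :=
    (hαβ.of_isCoprime_of_dvd_left ⟨C, rfl⟩).of_isCoprime_of_dvd_right ⟨B, by ring⟩
  have hB : Odd B := (Int.odd_mul.mp hm).2
  have hB0 : B ≠ 0 := by rintro rfl; simp at hB
  obtain ⟨k, hk₁, hk₂⟩ := hAD.exists_of_sq_mul_eq_sq_mul (by rintro rfl; simp at hm)
    (show A ^ 2 * (C ^ 2 - B ^ 2) = D ^ 2 * (B ^ 2 + 16 * C ^ 2) by linear_combination -hW)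
  have hk : 0 < k := pos_of_mul_pos_left (by rw [← hk₂]; positivity) (sq_nonneg A)
  have hBC : IsCoprime B C :=
    (hco.of_isCoprime_of_dvd_left ⟨A, by ring⟩).of_isCoprime_of_dvd_right ⟨D, rfl⟩
  rcases Int.eq_one_or_seventeen_of_dvd hk hBC
    ⟨A ^ 2 - 16 * D ^ 2, by linear_combination hk₂ - 16 * hk₁⟩
    ⟨A ^ 2 + D ^ 2, by linear_combination hk₂ + hk₁⟩ with rfl | rfl
  · exact absurd (by linear_combination -hk₁) (Int.sq_add_sq_ne_of_sq_eq_sq_add_sixteen_mul_sq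
      (Q := D) (R := A) hB hBC (by linear_combination -hk₂))
  have hBD : IsCoprime B D :=
    (hco.of_isCoprime_of_dvd_left ⟨A, by ring⟩).of_isCoprime_of_dvd_right ⟨C, by ring⟩
  obtain ⟨u, t, hu, hut, rfl, hA, hC⟩ :=
    Int.exists_sq_eq_biquadratic_of_sq_eq_sq_add_sixteen_mul_sq (R := A) (S := C) hB hBD
      (mul_left_cancel₀ (by norm_num : (17 : ℤ) ≠ 0) (by linear_combination 16 * hk₁ - hk₂))
      (mul_left_cancel₀ (by norm_num : (17 : ℤ) ≠ 0) (by linear_combination hk₁ + hk₂))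
  have ht : t ≠ 0 := by rintro rfl; simp at hn
  refine ⟨u, t, C, hu, hut, ht, ?_, hC⟩
  have huA : u ^ 2 < A ^ 2 := by
    rw [hA]
    nlinarith [(by positivity : 0 < t ^ 2)]
  nlinarith [(by positivity : 0 < B ^ 2)]

lemma Int.eq_zero_of_sq_eq_biquadratic {m n x : ℤ} (hm : Odd m) (hco : IsCoprime m n)
    (h : x ^ 2 = m ^ 4 + 9 * m ^ 2 * n ^ 2 + 16 * n ^ 4) : n = 0 := by
  induction hM : m.natAbs using Nat.strong_induction_on generalizing m n x with
  | _ M ih =>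
  by_contra hn
  obtain ⟨u, t, y, hu, hut, ht, hlt, hy⟩ := Int.exists_sq_lt_of_sq_eq_biquadratic hm hco hn h
  exact ht (ih _ (hM ▸ Int.natAbs_lt_iff_sq_lt.mpr hlt) hu hut hy rfl)

lemma Int.eq_zero_of_mul_eq_sq_add_sq_of_even {a b c d : ℤ} (hb : Even b) (had : IsCoprime a d)
    (hbc : IsCoprime b c) (h₁ : a * d = b ^ 2 + c ^ 2) (h₂ : b * c = a ^ 2 - d ^ 2) : b = 0 := by
  by_contra hb0
  have hc : Odd c := hbc.odd_right_of_even hb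
  obtain ⟨C, hC⟩ : Even (a - d) := by
    simpa [parity_simps] using (h₂ ▸ hb.mul_right c : Even (a ^ 2 - d ^ 2))
  obtain ⟨D, rfl⟩ : ∃ D, d = D - C := ⟨d + C, by ring⟩
  obtain rfl : a = D + C := by linarith
  have hCD : IsCoprime C D := by
    obtain ⟨u, v, huv⟩ := had
    exact ⟨u - v, u + v, by linear_combination huv⟩
  obtain ⟨b, rfl⟩ : 4 ∣ b := (Int.isCoprime_four_right_of_odd hc).symm.dvd_of_dvd_mul_right
    ⟨C * D, by linear_combination h₂⟩
  obtain ⟨P, Q, R, S, rfl, rfl, rfl, rfl⟩ := exists_mul_mul_of_mul_eq_mul (a := c) (b := b)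
    (c := C) (d := D) (by rintro rfl; simp at hc)
    (mul_left_cancel₀ four_ne_zero (by linear_combination h₂))
  have hQ : Q ≠ 0 := by rintro rfl; simp at hb0
  obtain ⟨hP, hR⟩ := Int.odd_mul.mp hc
  have hR0 : R ≠ 0 := by rintro rfl; simp at hR
  have hSP : IsCoprime S P :=
    (hCD.symm.of_isCoprime_of_dvd_left ⟨R, by ring⟩).of_isCoprime_of_dvd_right ⟨Q, rfl⟩
  obtain ⟨k, hk₁, hk₂⟩ := hSP.exists_of_sq_mul_eq_sq_mul (by rintro rfl; simp at hb0)
    (show S ^ 2 * (R ^ 2 - 16 * Q ^ 2) = P ^ 2 * (Q ^ 2 + R ^ 2) by linear_combination h₁)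
  have hk : 0 < k := pos_of_mul_pos_left (by rw [← hk₂]; positivity) (sq_nonneg S)
  have hQR : IsCoprime Q R :=
    (hCD.of_isCoprime_of_dvd_left ⟨P, by ring⟩).of_isCoprime_of_dvd_right ⟨S, rfl⟩
  rcases Int.eq_one_or_seventeen_of_dvd hk hQR ⟨S ^ 2 - P ^ 2, by linear_combination hk₂ - hk₁⟩
    ⟨16 * S ^ 2 + P ^ 2, by linear_combination 16 * hk₂ + hk₁⟩ with rfl | rfl
  · have hPQ : IsCoprime P Q :=
      (hbc.symm.of_isCoprime_of_dvd_left ⟨R, rfl⟩).of_isCoprime_of_dvd_right ⟨4 * S, by ring⟩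
    obtain ⟨u, t, hu, hut, rfl, -, hS⟩ :=
      Int.exists_sq_eq_biquadratic_of_sq_eq_sq_add_sixteen_mul_sq (R := R) (S := S) hP hPQ
        (by linear_combination hk₁) (by linear_combination -hk₂)
    exact hQ (by rw [Int.eq_zero_of_sq_eq_biquadratic hu hut hS, mul_zero])
  · exact Int.sq_add_sq_ne_of_sq_eq_sq_add_sixteen_mul_sq (Q := Q) (R := R) hP hSP.symm
      (mul_left_cancel₀ (by norm_num : (17 : ℤ) ≠ 0) (by linear_combination hk₁ + 16 * hk₂))
      (mul_left_cancel₀ (by norm_num : (17 : ℤ) ≠ 0) (by linear_combination hk₂ - hk₁))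

lemma Int.mul_eq_zero_of_mul_eq_sq_add_sq {a b c d : ℤ} (had : IsCoprime a d)
    (hbc : IsCoprime b c) (h₁ : a * d = b ^ 2 + c ^ 2) (h₂ : b * c = a ^ 2 - d ^ 2) :
    b * c = 0 := by
  rcases Int.even_or_odd b with hb | hb
  · rw [Int.eq_zero_of_mul_eq_sq_add_sq_of_even hb had hbc h₁ h₂, zero_mul]
  rcases Int.even_or_odd c with hc | hc
  · rw [Int.eq_zero_of_mul_eq_sq_add_sq_of_even hc had hbc.symm (by linear_combination h₁)
      (by linear_combination h₂), mul_zero]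
  exfalso
  have hodd : Odd ((a - d) * (a + d)) := by
    rw [show (a - d) * (a + d) = b * c by linear_combination -h₂]
    exact hb.mul hc
  obtain ⟨P, Q, R, S, rfl, rfl, hPQ, hRS⟩ := exists_mul_mul_of_mul_eq_mul
    (a := b) (b := c) (c := a - d) (d := a + d) (by rintro rfl; simp at hb)
    (by linear_combination h₂)
  have e : 4 * (a * d) = (R * S) ^ 2 - (P * Q) ^ 2 := by rw [← hRS, ← hPQ]; ring
  have hco := had.sub_add_of_odd (Int.odd_mul.mp hodd).1
  exact Int.sq_mul_ne_sq_mul_of_odd (P := Q) (Q := P) (R := S) (S := R)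
    (Int.odd_mul.mp hb).1 (Int.odd_mul.mp hc).2 (Int.odd_mul.mp hb).2
    ((hco.symm.of_isCoprime_of_dvd_left ⟨S, hRS⟩).of_isCoprime_of_dvd_right ⟨P, by rw [hPQ]; ring⟩)
    ((hco.symm.of_isCoprime_of_dvd_left ⟨R, by rw [hRS]; ring⟩).of_isCoprime_of_dvd_right ⟨Q, hPQ⟩)
    (by linear_combination 4 * h₁ - e)

lemma Int.exists_unit_of_sq_sub_sq_mul_eq {P Q R S : ℤ} (hPS : IsCoprime P S)
    (hQR : IsCoprime Q R) (hQ : Q ≠ 0)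
    (h : (P ^ 2 - S ^ 2) * (Q ^ 2 + R ^ 2) = P * S * (Q * R)) :
    ∃ ε : ℤ, (ε = 1 ∨ ε = -1) ∧ P * S = ε * (Q ^ 2 + R ^ 2) ∧ P ^ 2 - S ^ 2 = ε * (Q * R) := by
  have hN : Q ^ 2 + R ^ 2 ≠ 0 := by positivity
  have hNQR : IsCoprime (Q ^ 2 + R ^ 2) (Q * R) := by
    simpa using isCoprime_one_right.sq_add_mul_sq_mul hQR
  obtain ⟨ε, hε⟩ := hNQR.dvd_of_dvd_mul_right
    (show Q ^ 2 + R ^ 2 ∣ P * S * (Q * R) from ⟨P ^ 2 - S ^ 2, by linear_combination -h⟩)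
  have hε' : P ^ 2 - S ^ 2 = ε * (Q * R) :=
    mul_left_cancel₀ hN (by linear_combination h + Q * R * hε)
  have hPS' : IsCoprime (P ^ 2 - S ^ 2) (P * S) := by
    simpa [← sub_eq_add_neg] using isCoprime_one_right.neg_right.sq_add_mul_sq_mul hPS
  have hunit : IsUnit ε := hPS'.isUnit_of_dvd' (Dvd.intro _ hε'.symm) (Dvd.intro_left _ hε.symm)
  exact ⟨ε, Int.isUnit_iff.mp hunit, by rw [hε, mul_comm], hε'⟩

lemma Int.mul_eq_zero_of_sq_eq_sq_add_four_mul_sq {p r Y : ℤ} (hco : IsCoprime p r)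
    (h : Y ^ 2 = (r ^ 2 + p * r - p ^ 2) ^ 2 + 4 * (p * r) ^ 2) : p * r = 0 := by
  by_contra hpr
  have hA : Odd (r ^ 2 + p * r - p ^ 2) := by
    have : ¬ (Even p ∧ Even r) := fun ⟨hp, hr⟩ ↦ by
      have := Int.isUnit_iff.mp
        (hco.isUnit_of_dvd' (even_iff_two_dvd.mp hp) (even_iff_two_dvd.mp hr))
      omega
    rcases Int.even_or_odd p with hp | hp <;> rcases Int.even_or_odd r with hr | hr <;>
      simp_all [parity_simps, ← Int.not_even_iff_odd]
  have hAp : IsCoprime (r ^ 2 + p * r - p ^ 2) (p * r) := by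
    refine IsCoprime.mul_right ?_ ?_
    · rw [show r ^ 2 + p * r - p ^ 2 = r ^ 2 + p * (r - p) by ring]
      exact (hco.pow_right.add_mul_left_right _).symm
    · rw [show r ^ 2 + p * r - p ^ 2 = -p ^ 2 + r * (r + p) by ring]
      exact (hco.symm.pow_right.neg_right.add_mul_left_right _).symm
  obtain ⟨u, v, huv, -, hA', hX⟩ := Int.exists_sq_sub_sq_of_sq_eq_sq_add_sq (Z := Y) hA hAp
    (by linear_combination h)
  obtain ⟨P, Q, R, S, rfl, rfl, rfl, rfl⟩ := exists_mul_mul_of_mul_eq_mul (a := p) (b := r)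
    (by rintro rfl; simp at hpr) hX
  have hPS : IsCoprime P S :=
    (huv.of_isCoprime_of_dvd_left ⟨Q, rfl⟩).of_isCoprime_of_dvd_right ⟨R, by ring⟩
  have hQR : IsCoprime Q R :=
    (hco.symm.of_isCoprime_of_dvd_left ⟨S, rfl⟩).of_isCoprime_of_dvd_right ⟨P, by ring⟩
  obtain ⟨ε, hε, h₁, h₂⟩ := Int.exists_unit_of_sq_sub_sq_mul_eq hPS hQR
    (by rintro rfl; simp at hpr) (by linear_combination -hA')
  have hQR0 : Q * R = 0 := by
    rcases hε with rfl | rfl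
    · exact Int.mul_eq_zero_of_mul_eq_sq_add_sq hPS hQR (by linear_combination h₁)
        (by linear_combination -h₂)
    · have := Int.mul_eq_zero_of_mul_eq_sq_add_sq (a := -P) (b := -Q) hPS.neg_left hQR.neg_left
        (by linear_combination -h₁) (by linear_combination -h₂)
      linear_combination -this
  exact hpr (by linear_combination (P * S) * hQR0)

lemma Rat.eq_zero_or_eq_one_of_sq_eq_quartic {y z : ℚ}
    (h : y ^ 2 = 5 * z ^ 4 - 14 * z ^ 3 + 15 * z ^ 2 - 6 * z + 1) : z = 0 ∨ z = 1 := by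
  set p := z.num
  set q := z.den
  set r := p - q
  have hq : (q : ℚ) ≠ 0 := by positivity
  have hz : z = p / q := (Rat.num_div_den z).symm
  have hsq : IsSquare (((r ^ 2 + p * r - p ^ 2) ^ 2 + 4 * (p * r) ^ 2 : ℤ) : ℚ) := by
    refine ⟨y * q ^ 2, ?_⟩
    rw [show y * q ^ 2 * (y * q ^ 2) = y ^ 2 * q ^ 4 by ring, h, hz]
    push_cast [r]
    field_simp
    ring
  obtain ⟨Y, hY⟩ := Rat.isSquare_intCast_iff.mp hsq
  have hco : IsCoprime p r := by
    rw [show r = -(q : ℤ) + p * 1 by ring]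
    exact (Rat.isCoprime_num_den z).neg_right.add_mul_left_right 1
  rcases mul_eq_zero.mp (Int.mul_eq_zero_of_sq_eq_sq_add_four_mul_sq hco (Y := Y)
    (by rw [hY]; ring)) with h0 | h0
  · exact Or.inl (Rat.num_eq_zero.mp h0)
  · right
    rw [hz, show p = q by omega]
    exact div_self hq

/-- The only rational points on
`c²z² - 3c²z + c² + cz² + cz - c - z² + z = 0` are
`(0,0), (0,1), (1,0), (1,1)` (graph N3E3). -/
theorem stmt_5 :
    {p : ℚ × ℚ |
        p.1 ^ 2 * p.2 ^ 2 - 3 * p.1 ^ 2 * p.2 + p.1 ^ 2 + p.1 * p.2 ^ 2 +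
          p.1 * p.2 - p.1 - p.2 ^ 2 + p.2 = 0} =
      ({(0, 0), (0, 1), (1, 0), (1, 1)} : Set (ℚ × ℚ)) := by
  ext ⟨c, z⟩
  simp only [Set.mem_ofPred_eq, Set.mem_insert_iff, Set.mem_singleton_iff, Prod.mk.injEq]
  constructor
  · intro h
    have hz := Rat.eq_zero_or_eq_one_of_sq_eq_quartic
      (y := 2 * (z ^ 2 - 3 * z + 1) * c + z ^ 2 + z - 1)
      (by linear_combination 4 * (z ^ 2 - 3 * z + 1) * h)
    have hc : c * (c - 1) = 0 := by
      rcases hz with rfl | rfl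
      · linear_combination h
      · linear_combination -h
    rcases mul_eq_zero.mp hc with rfl | hc
    · rcases hz with rfl | rfl <;> simp
    · obtain rfl : c = 1 := by linear_combination hc
      rcases hz with rfl | rfl <;> simp
  · rintro (⟨rfl, rfl⟩ | ⟨rfl, rfl⟩ | ⟨rfl, rfl⟩ | ⟨rfl, rfl⟩) <;> norm_num
end

section
/- The set of pairs (x, y) ∈ ℚ × ℚ satisfying y² = x⁴ − 14x³ + 15x² − 6x + 1 is infinite. Consequently, there are infinitely many pairwise non-linearly-equivalent quadratic rational maps over ℚ realizing the preperiodicity graph R3P5, i.e. having a rational critical 3-cycle, a rational 2-cycle with rational non-periodic preimages of both points of the 2-cycle, and a rational second preimage of one of those preimages. -/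
/-! The quartic is birational to `E : v² = X³ - 3X² + 8X + 16`, a model of 53a1 (put
`X = 4x`, `v = 4(2y + x + 1)` in `y² + xy + y = x³ - x²`), via `toQuartic`. The point
`P = (369/16, 6673/64)` of `E` has `|X|₂ = 16 > 1`, and on points with `|X|₂ > 1` doubling
multiplies `|X|₂` by `1/|4|₂ = 4`, because the numerator and denominator of the duplication
formula are dominated by `X⁴` and `4v²`, with `|v|₂² = |X|₂³`. So the points `2ᵏP` have distinct
`2`-adic sizes, and their images on the quartic have `|x|₂² = 4^-(k+3)`: they are pairwise
distinct and avoid `0, 1, 1/2`. Each such `x = d` yields a rational `w`, since the discriminant of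
the quadratic in `w` is `(d - 1)²` times the quartic. -/

namespace R3P5

section Doubling

variable {F : Type*} [Field F]

def OnCubic (a b c : ℤ) (P : F × F) : Prop :=
  P.2 ^ 2 = P.1 ^ 3 + a * P.1 ^ 2 + b * P.1 + c

def tangentSlope (a b : ℤ) (P : F × F) : F :=
  (3 * P.1 ^ 2 + 2 * a * P.1 + b) / (2 * P.2)

def double (a b : ℤ) (P : F × F) : F × F :=
  let l := tangentSlope a b P
  let x := l ^ 2 - a - 2 * P.1
  (x, l * (P.1 - x) - P.2)

variable {a b c : ℤ} {P : F × F}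

lemma double_fst (hP : OnCubic a b c P) (hy : 2 * P.2 ≠ 0) :
    (double a b P).1 =
      (P.1 ^ 4 - 2 * b * P.1 ^ 2 - 8 * c * P.1 + b ^ 2 - 4 * a * c) / (4 * P.2 ^ 2) := by
  unfold OnCubic at hP
  have hy' : P.2 ≠ 0 := right_ne_zero_of_mul hy
  have h2 : (2 : F) ≠ 0 := left_ne_zero_of_mul hy
  have h4y : 4 * P.2 ^ 2 ≠ 0 := by
    rw [show (4 : F) * P.2 ^ 2 = (2 * P.2) ^ 2 by ring]; exact pow_ne_zero 2 hy
  simp only [double, tangentSlope]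
  rw [eq_div_iff h4y]
  field_simp
  linear_combination (-16 * (a + 2 * P.1)) * hP

lemma onCubic_double (hP : OnCubic a b c P) (hy : 2 * P.2 ≠ 0) :
    OnCubic a b c (double a b P) := by
  unfold OnCubic at hP ⊢
  simp only [double]
  set l := tangentSlope a b P with hl
  have hl' : l * (2 * P.2) = 3 * P.1 ^ 2 + 2 * a * P.1 + b := by
    rw [hl, tangentSlope, div_mul_cancel₀ _ hy]
  linear_combination hP + (l ^ 2 - a - 3 * P.1) * hl'

end Doubling

section PadicNorm

open IsAbsoluteValue

variable {p : ℕ} [Fact p.Prime]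

lemma padicNorm_add_eq_left {q r : ℚ} (h : padicNorm p r < padicNorm p q) :
    padicNorm p (q + r) = padicNorm p q := by
  rw [padicNorm.add_eq_max_of_ne h.ne', max_eq_left h.le]

lemma padicNorm_intCast_mul_le (n : ℤ) (q : ℚ) : padicNorm p (n * q) ≤ padicNorm p q := by
  rw [padicNorm.mul]
  exact mul_le_of_le_one_left (padicNorm.nonneg q) (padicNorm.of_int n)

lemma padicNorm_linear_le (b c : ℤ) {x : ℚ} (hx : 1 ≤ padicNorm p x) :
    padicNorm p (b * x + c) ≤ padicNorm p x :=
  padicNorm.nonarchimedean.trans <|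
    max_le (padicNorm_intCast_mul_le b x) ((padicNorm.of_int c).trans hx)

lemma padicNorm_quadratic_le (a b c : ℤ) {x : ℚ} (hx : 1 ≤ padicNorm p x) :
    padicNorm p (a * x ^ 2 + b * x + c) ≤ padicNorm p x ^ 2 := by
  rw [add_assoc, ← abv_pow (padicNorm p)]
  refine padicNorm.nonarchimedean.trans (max_le (padicNorm_intCast_mul_le a _) ?_)
  rw [abv_pow (padicNorm p)]
  exact (padicNorm_linear_le b c hx).trans (le_self_pow₀ hx two_ne_zero)

variable {a b c : ℤ} {P : ℚ × ℚ}

lemma padicNorm_snd_sq (hP : OnCubic a b c P) (hx : 1 < padicNorm p P.1) :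
    padicNorm p P.2 ^ 2 = padicNorm p P.1 ^ 3 := by
  have hlt : padicNorm p (a * P.1 ^ 2 + b * P.1 + c) < padicNorm p (P.1 ^ 3) := by
    rw [abv_pow (padicNorm p)]
    exact (padicNorm_quadratic_le a b c hx.le).trans_lt (pow_lt_pow_right₀ hx (by norm_num))
  rw [← abv_pow (padicNorm p), hP, add_assoc, add_assoc, ← add_assoc (_ * _),
    padicNorm_add_eq_left hlt, abv_pow (padicNorm p)]

lemma snd_ne_zero_of_one_lt_padicNorm (hP : OnCubic a b c P) (hx : 1 < padicNorm p P.1) :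
    P.2 ≠ 0 := by
  rintro hy
  have hy2 := padicNorm_snd_sq hP hx
  rw [hy, padicNorm.zero] at hy2
  exact absurd hy2.symm (pow_ne_zero 3 (by positivity))

lemma padicNorm_double_fst (hP : OnCubic a b c P) (hx : 1 < padicNorm p P.1) :
    padicNorm p (double a b P).1 = padicNorm p P.1 / padicNorm p 4 := by
  have hy2 := padicNorm_snd_sq hP hx
  have hy := snd_ne_zero_of_one_lt_padicNorm hP hx
  have hnum : P.1 ^ 4 - 2 * b * P.1 ^ 2 - 8 * c * P.1 + b ^ 2 - 4 * a * c =
      P.1 ^ 4 + (((-2 * b : ℤ) : ℚ) * P.1 ^ 2 + ((-8 * c : ℤ) : ℚ) * P.1 +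
        ((b ^ 2 - 4 * a * c : ℤ) : ℚ)) := by
    push_cast; ring
  have hlt := (padicNorm_quadratic_le (p := p) (-2 * b) (-8 * c) (b ^ 2 - 4 * a * c)
    hx.le).trans_lt (pow_lt_pow_right₀ hx (by norm_num : 2 < 4))
  rw [double_fst hP (mul_ne_zero two_ne_zero hy), hnum, padicNorm.div,
    padicNorm_add_eq_left (by rwa [abv_pow (padicNorm p)]), padicNorm.mul,
    abv_pow (padicNorm p), abv_pow (padicNorm p), hy2]
  have : padicNorm p P.1 ≠ 0 := by positivity
  field_simp

lemma padicNorm_toQuartic_denom (hP : OnCubic a b c P) (hx : 1 < padicNorm p P.1) :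
    padicNorm p (3 * P.1 - 4 - P.2) = padicNorm p P.2 := by
  have hXY : padicNorm p P.1 < padicNorm p P.2 := by
    refine lt_of_pow_lt_pow_left₀ 2 (padicNorm.nonneg _) ?_
    rw [padicNorm_snd_sq hP hx]
    exact pow_lt_pow_right₀ hx (by norm_num)
  have hlt := (padicNorm_linear_le (p := p) 3 (-4) hx.le).trans_lt hXY
  rw [show 3 * P.1 - 4 - P.2 = -P.2 + (((3 : ℤ) : ℚ) * P.1 + ((-4 : ℤ) : ℚ)) by push_cast; ring,
    padicNorm_add_eq_left (by rwa [padicNorm.neg]), padicNorm.neg]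

end PadicNorm

section Quartic

variable {F : Type*} [Field F]

def quartic (x : F) : F := x ^ 4 - 14 * x ^ 3 + 15 * x ^ 2 - 6 * x + 1

def toQuartic (P : F × F) : F × F :=
  let x := 2 * P.1 / (3 * P.1 - 4 - P.2)
  (x, (6 - P.1) / 2 * x ^ 2 + 1 - 3 * x)

lemma toQuartic_snd_sq [NeZero (2 : F)] {P : F × F} (hP : OnCubic (-3) 8 16 P)
    (hden : 3 * P.1 - 4 - P.2 ≠ 0) : (toQuartic P).2 ^ 2 = quartic (toQuartic P).1 := by
  unfold OnCubic at hP
  push_cast at hP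
  have hden' : P.1 * 3 - 4 - P.2 ≠ 0 := by rwa [mul_comm]
  simp only [toQuartic, quartic]
  field_simp
  linear_combination (-4 * P.1 ^ 3) * hP

lemma exists_preimage_of_sq_eq_quartic [NeZero (2 : F)] {d y : F} (hd : 2 * d - 1 ≠ 0)
    (hy : y ^ 2 = quartic d) :
    ∃ w : F, (4 * d ^ 2 - 4 * d + 1) * w ^ 2 - (d ^ 3 - 2 * d + 1) * w +
      d ^ 3 - 2 * d ^ 2 + d = 0 := by
  have ha : 4 * d ^ 2 - 4 * d + 1 ≠ 0 := by
    rw [show 4 * d ^ 2 - 4 * d + 1 = (2 * d - 1) ^ 2 by ring]; exact pow_ne_zero 2 hd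
  have hdiscrim : discrim (4 * d ^ 2 - 4 * d + 1) (-(d ^ 3 - 2 * d + 1)) (d ^ 3 - 2 * d ^ 2 + d) =
      ((d - 1) * y) * ((d - 1) * y) := by
    unfold discrim quartic at *
    linear_combination (-(d - 1) ^ 2) * hy
  obtain ⟨w, hw⟩ := exists_quadratic_eq_zero ha ⟨_, hdiscrim⟩
  exact ⟨w, by linear_combination hw⟩

end Quartic

lemma padicNorm_toQuartic_fst_sq {p : ℕ} [Fact p.Prime] {a b c : ℤ} {P : ℚ × ℚ}
    (hP : OnCubic a b c P) (hx : 1 < padicNorm p P.1) :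
    padicNorm p (toQuartic P).1 ^ 2 = padicNorm p 2 ^ 2 / padicNorm p P.1 := by
  have hy2 := padicNorm_snd_sq hP hx
  have hx0 : padicNorm p P.1 ≠ 0 := by positivity
  simp only [toQuartic]
  rw [padicNorm.div, padicNorm.mul, padicNorm_toQuartic_denom hP hx, div_pow, mul_pow, hy2]
  field_simp

lemma padicNorm_two_two : padicNorm 2 2 = 1 / 2 := by
  simpa using padicNorm.padicNorm_p_of_prime (p := 2)

lemma padicNorm_two_four : padicNorm 2 4 = 1 / 4 := by
  rw [show (4 : ℚ) = 2 * 2 by norm_num, padicNorm.mul, padicNorm_two_two]; norm_num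

def basePoint : ℚ × ℚ := (369 / 16, 6673 / 64)

def doublingSeq (k : ℕ) : ℚ × ℚ := (double (-3) 8)^[k] basePoint

lemma onCubic_basePoint : OnCubic (-3) 8 16 basePoint := by
  norm_num [OnCubic, basePoint]

lemma padicNorm_basePoint_fst : padicNorm 2 basePoint.1 = 4 ^ 2 := by
  have h369 : padicNorm 2 369 = 1 := by
    simpa using (padicNorm.nat_eq_one_iff (p := 2) 369).mpr (by norm_num)
  have h16 : padicNorm 2 16 = 1 / 16 := by
    rw [show (16 : ℚ) = 4 * 4 by norm_num, padicNorm.mul, padicNorm_two_four]; norm_num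
  rw [basePoint, padicNorm.div, h369, h16]; norm_num

lemma doublingSeq_spec (k : ℕ) :
    OnCubic (-3) 8 16 (doublingSeq k) ∧ padicNorm 2 (doublingSeq k).1 = 4 ^ (k + 2) := by
  induction k with
  | zero => exact ⟨onCubic_basePoint, by simpa [doublingSeq] using padicNorm_basePoint_fst⟩
  | succ k ih =>
    obtain ⟨hP, hx⟩ := ih
    have hx1 : 1 < padicNorm 2 (doublingSeq k).1 := by
      rw [hx]; exact one_lt_pow₀ (by norm_num) (by omega)
    have hy := snd_ne_zero_of_one_lt_padicNorm hP hx1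
    rw [doublingSeq, Function.iterate_succ_apply', ← doublingSeq]
    refine ⟨onCubic_double hP (mul_ne_zero two_ne_zero hy), ?_⟩
    rw [padicNorm_double_fst hP hx1, hx, padicNorm_two_four]
    ring

lemma one_lt_padicNorm_doublingSeq_fst (k : ℕ) : 1 < padicNorm 2 (doublingSeq k).1 := by
  rw [(doublingSeq_spec k).2]; exact one_lt_pow₀ (by norm_num) (by omega)

def quarticPoint (k : ℕ) : ℚ × ℚ := toQuartic (doublingSeq k)

lemma quarticPoint_snd_sq (k : ℕ) : (quarticPoint k).2 ^ 2 = quartic (quarticPoint k).1 := by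
  have hP := (doublingSeq_spec k).1
  have hx := one_lt_padicNorm_doublingSeq_fst k
  refine toQuartic_snd_sq hP fun hden => snd_ne_zero_of_one_lt_padicNorm hP hx ?_
  exact padicNorm.zero_of_padicNorm_eq_zero
    (by rw [← padicNorm_toQuartic_denom hP hx, hden, padicNorm.zero])

lemma padicNorm_quarticPoint_fst_sq (k : ℕ) :
    padicNorm 2 (quarticPoint k).1 ^ 2 = 1 / 4 ^ (k + 3) := by
  rw [quarticPoint, padicNorm_toQuartic_fst_sq (doublingSeq_spec k).1
    (one_lt_padicNorm_doublingSeq_fst k), (doublingSeq_spec k).2, padicNorm_two_two]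
  ring

lemma quarticPoint_fst_injective : Function.Injective fun k => (quarticPoint k).1 := by
  intro j k hjk
  have h := padicNorm_quarticPoint_fst_sq j
  rw [show (quarticPoint j).1 = (quarticPoint k).1 from hjk, padicNorm_quarticPoint_fst_sq k,
    one_div, one_div, inv_inj] at h
  have := pow_right_injective₀ (by norm_num : (0 : ℚ) < 4) (by norm_num) h
  omega

lemma quarticPoint_fst_ne (k : ℕ) :
    (quarticPoint k).1 ≠ 0 ∧ (quarticPoint k).1 ≠ 1 ∧ (quarticPoint k).1 ≠ 1 / 2 := by
  have h := padicNorm_quarticPoint_fst_sq k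
  have hpos : (0 : ℚ) < 1 / 4 ^ (k + 3) := by positivity
  have hlt : (1 : ℚ) / 4 ^ (k + 3) < 1 := by
    rw [div_lt_one (by positivity)]; exact one_lt_pow₀ (by norm_num) (by omega)
  refine ⟨?_, ?_, ?_⟩ <;> rintro hx <;> rw [hx] at h
  · rw [padicNorm.zero] at h; linarith
  · rw [padicNorm.one] at h; linarith
  · rw [padicNorm.div, padicNorm.one, padicNorm_two_two] at h; linarith

end R3P5

open R3P5

/-- The genus 1 quartic curve `y² = x⁴ - 14x³ + 15x² - 6x + 1` has infinitely
many rational points; consequently there are infinitely many parameters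
`d ∉ {0, 1, 1/2}` for which the map
`φ_d(z) = ((2d-1)z² - (d²+d-1)z + d²-d)/((2d-1)z²)` realizes the graph R3P5,
i.e. the non-periodic preimage `-d/(d-1)` of the period-2 point `d` has a
rational preimage `w`; distinct such parameters give pairwise
non-linearly-equivalent quadratic rational maps over `ℚ`. -/
theorem stmt_19 :
    {p : ℚ × ℚ |
        p.2 ^ 2 = p.1 ^ 4 - 14 * p.1 ^ 3 + 15 * p.1 ^ 2 - 6 * p.1 + 1}.Infinite ∧
    {d : ℚ | d ≠ 0 ∧ d ≠ 1 ∧ d ≠ 1/2 ∧ ∃ w : ℚ,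
        (4 * d ^ 2 - 4 * d + 1) * w ^ 2 - (d ^ 3 - 2 * d + 1) * w +
          d ^ 3 - 2 * d ^ 2 + d = 0}.Infinite := by
  refine ⟨Set.infinite_of_injective_forall_mem (f := quarticPoint)
    quarticPoint_fst_injective.of_comp quarticPoint_snd_sq, ?_⟩
  refine Set.infinite_of_injective_forall_mem quarticPoint_fst_injective fun k => ?_
  obtain ⟨h0, h1, h2⟩ := quarticPoint_fst_ne k
  refine ⟨h0, h1, h2, exists_preimage_of_sq_eq_quartic ?_ (quarticPoint_snd_sq k)⟩
  exact fun h => h2 (by linear_combination h / 2)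
end
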